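/- Given a finite data set D = {(x_i, y_i)}_{i=1}^N with all x_i nonzero, let ρ̂(D,P) = max_i ‖y_i‖_P / ‖x_i‖_P for P positive definite, where ‖z‖_P = sqrt(z^T P z). If P⋆ is positive definite and γ⋆ = ρ̂(D, P⋆), then ρ̂(D, I) ≤ γ⋆ · κ(P⋆), where κ(P) = sqrt(det(P)/λ_min(P)^n). -/

import Mathlib

open Matrix

noncomputable def lamMin {n : ℕ} (X : Matrix (Fin n) (Fin n) ℝ) : ℝ :=
  sInf {t : ℝ | ∃ v : Fin n → ℝ, v ≠ 0 ∧ X.mulVec v = t • v}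

noncomputable def kappa {n : ℕ} (P : Matrix (Fin n) (Fin n) ℝ) : ℝ :=
  Real.sqrt (P.det / (lamMin P) ^ n)

noncomputable def normP {n : ℕ} (P : Matrix (Fin n) (Fin n) ℝ) (z : Fin n → ℝ) : ℝ :=
  Real.sqrt (z ⬝ᵥ P.mulVec z)

/-! A positive definite `P` is squeezed between `λ_min • 1` and `λ_max • 1`, so the `P`-norm
distorts the ratio `‖y‖ / ‖x‖` by a factor at most `√(λ_max / λ_min)`. Since all eigenvalues of
`P` are at least `λ_min`, we have `det P ≥ λ_max · λ_min ^ (n - 1)`, which bounds that factor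
by `κ(P) = √(det P / λ_min ^ n)`. -/

namespace Matrix

theorem setOf_exists_mulVec_eq_smul_eq_spectrum {K ι : Type*} [Field K] [Fintype ι]
    [DecidableEq ι] (A : Matrix ι ι K) :
    {t : K | ∃ v : ι → K, v ≠ 0 ∧ A *ᵥ v = t • v} = spectrum K A := by
  ext t
  simp only [Set.mem_ofPred_eq, ← spectrum_toLin', ← Module.End.hasEigenvalue_iff_mem_spectrum,
    Module.End.hasEigenvalue_iff, Submodule.ne_bot_iff, Module.End.mem_eigenspace_iff,
    toLin'_apply, and_comm]

namespace IsHermitian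

variable {ι : Type*} [Fintype ι] [DecidableEq ι] {A : Matrix ι ι ℝ} (hA : A.IsHermitian)

theorem exists_dotProduct_mulVec_eq_sum_eigenvalues (v : ι → ℝ) :
    ∃ w : ι → ℝ, v ⬝ᵥ A *ᵥ v = ∑ i, hA.eigenvalues i * w i ^ 2 ∧ v ⬝ᵥ v = ∑ i, w i ^ 2 := by
  set U : Matrix ι ι ℝ := (hA.eigenvectorUnitary : Matrix ι ι ℝ)
  have hUU : U * star U = 1 := mem_unitaryGroup_iff.mp hA.eigenvectorUnitary.2
  have hstar : star U *ᵥ v = v ᵥ* U := by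
    rw [star_eq_conjTranspose, conjTranspose_eq_transpose_of_trivial, mulVec_transpose]
  refine ⟨v ᵥ* U, ?_, ?_⟩
  · conv_lhs => rw [hA.spectral_theorem, Unitary.conjStarAlgAut_apply]
    rw [mul_assoc, ← mulVec_mulVec, dotProduct_mulVec, ← mulVec_mulVec, hstar, dotProduct]
    refine Fintype.sum_congr _ _ fun i => ?_
    simp only [RCLike.ofReal_real_eq_id, CompTriple.comp_eq, mulVec_diagonal]
    ring
  · calc v ⬝ᵥ v = v ⬝ᵥ (U * star U) *ᵥ v := by rw [hUU, one_mulVec]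
      _ = ∑ i, (v ᵥ* U) i ^ 2 := by
        rw [← mulVec_mulVec, hstar, dotProduct_mulVec]
        simp [dotProduct, sq]

theorem mul_dotProduct_self_le {m : ℝ} (hm : ∀ i, m ≤ hA.eigenvalues i) (v : ι → ℝ) :
    m * (v ⬝ᵥ v) ≤ v ⬝ᵥ A *ᵥ v := by
  obtain ⟨w, hq, hs⟩ := hA.exists_dotProduct_mulVec_eq_sum_eigenvalues v
  rw [hq, hs, Finset.mul_sum]
  exact Finset.sum_le_sum fun i _ => mul_le_mul_of_nonneg_right (hm i) (sq_nonneg _)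

theorem dotProduct_mulVec_le {M : ℝ} (hM : ∀ i, hA.eigenvalues i ≤ M) (v : ι → ℝ) :
    v ⬝ᵥ A *ᵥ v ≤ M * (v ⬝ᵥ v) := by
  obtain ⟨w, hq, hs⟩ := hA.exists_dotProduct_mulVec_eq_sum_eigenvalues v
  rw [hq, hs, Finset.mul_sum]
  exact Finset.sum_le_sum fun i _ => mul_le_mul_of_nonneg_right (hM i) (sq_nonneg _)

theorem eigenvalues_mul_pow_le_det {m : ℝ} (hm0 : 0 ≤ m) (hm : ∀ i, m ≤ hA.eigenvalues i)
    (j : ι) : hA.eigenvalues j * m ^ (Fintype.card ι - 1) ≤ A.det := by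
  rw [hA.det_eq_prod_eigenvalues, ← Finset.mul_prod_erase _ _ (Finset.mem_univ j)]
  refine mul_le_mul_of_nonneg_left ?_ (hm0.trans (hm j))
  calc m ^ (Fintype.card ι - 1) = ∏ _i ∈ Finset.univ.erase j, m := by
        rw [Finset.prod_const, Finset.card_erase_of_mem (Finset.mem_univ j), Finset.card_univ]
    _ ≤ ∏ i ∈ Finset.univ.erase j, hA.eigenvalues i :=
        Finset.prod_le_prod (fun _ _ => hm0) fun i _ => by simpa using hm i

end IsHermitian

end Matrix

theorem Matrix.IsHermitian.lamMin_eq {n : ℕ} {A : Matrix (Fin n) (Fin n) ℝ}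
    (hA : A.IsHermitian) {j : Fin n} (hj : ∀ i, hA.eigenvalues j ≤ hA.eigenvalues i) :
    lamMin A = hA.eigenvalues j := by
  rw [lamMin, setOf_exists_mulVec_eq_smul_eq_spectrum,
    hA.spectrum_real_eq_range_eigenvalues]
  exact IsLeast.csInf_eq ⟨⟨j, rfl⟩, Set.forall_mem_range.mpr hj⟩

theorem Matrix.PosDef.sqrt_eigenvalues_div_lamMin_le_kappa {n : ℕ}
    {P : Matrix (Fin n) (Fin n) ℝ} (hP : P.PosDef) (k : Fin n) :
    √(hP.1.eigenvalues k / lamMin P) ≤ kappa P := by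
  have : Nonempty (Fin n) := ⟨k⟩
  obtain ⟨j, hj⟩ := Finite.exists_min hP.1.eigenvalues
  have hm := hP.eigenvalues_pos j
  have hdet := hP.1.eigenvalues_mul_pow_le_det hm.le hj k
  rw [Fintype.card_fin] at hdet
  have hpow : hP.1.eigenvalues j ^ n = hP.1.eigenvalues j ^ (n - 1) * hP.1.eigenvalues j := by
    rw [← pow_succ, Nat.sub_add_cancel (Fin.pos k)]
  rw [kappa, hP.1.lamMin_eq hj]
  refine Real.sqrt_le_sqrt ?_
  rw [hpow, ← div_div, div_le_div_iff_of_pos_right hm]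
  exact (le_div_iff₀ (by positivity)).mpr hdet

theorem normP_one_eq {n : ℕ} (v : Fin n → ℝ) : normP 1 v = √(v ⬝ᵥ v) := by
  rw [normP, one_mulVec]

theorem sqrt_mul_normP_one_le_normP {n : ℕ} {P : Matrix (Fin n) (Fin n) ℝ}
    (hP : P.IsHermitian) {m : ℝ} (hm0 : 0 ≤ m) (hm : ∀ i, m ≤ hP.eigenvalues i)
    (v : Fin n → ℝ) : √m * normP 1 v ≤ normP P v := by
  rw [normP_one_eq, normP, ← Real.sqrt_mul hm0]
  exact Real.sqrt_le_sqrt (hP.mul_dotProduct_self_le hm v)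

theorem normP_le_sqrt_mul_normP_one {n : ℕ} {P : Matrix (Fin n) (Fin n) ℝ}
    (hP : P.IsHermitian) {M : ℝ} (hM0 : 0 ≤ M) (hM : ∀ i, hP.eigenvalues i ≤ M)
    (v : Fin n → ℝ) : normP P v ≤ √M * normP 1 v := by
  rw [normP_one_eq, normP, ← Real.sqrt_mul hM0]
  exact Real.sqrt_le_sqrt (hP.dotProduct_mulVec_le hM v)

-- Also true for `v = 0`, where both quotients are `0` by the convention `a / 0 = 0`.
theorem normP_one_div_le_mul_kappa {n : ℕ} {P : Matrix (Fin n) (Fin n) ℝ} (hP : P.PosDef)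
    (u v : Fin n → ℝ) : normP 1 u / normP 1 v ≤ normP P u / normP P v * kappa P := by
  rcases eq_or_ne v 0 with rfl | hv
  · simp [normP]
  obtain ⟨k, -⟩ := Function.ne_iff.mp hv
  have : Nonempty (Fin n) := ⟨k⟩
  obtain ⟨j, hj⟩ := Finite.exists_min hP.1.eigenvalues
  obtain ⟨J, hJ⟩ := Finite.exists_max hP.1.eigenvalues
  have hm := hP.eigenvalues_pos j
  have hM := hP.eigenvalues_pos J
  have hvP : 0 < normP P v := Real.sqrt_pos.mpr (hP.dotProduct_mulVec_pos hv)
  have hu := sqrt_mul_normP_one_le_normP hP.1 hm.le hj u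
  have hv' := normP_le_sqrt_mul_normP_one hP.1 hM.le hJ v
  have hκ := hP.sqrt_eigenvalues_div_lamMin_le_kappa J
  rw [hP.1.lamMin_eq hj, Real.sqrt_div hM.le] at hκ
  have hsm := Real.sqrt_pos.mpr hm
  have hsM := Real.sqrt_pos.mpr hM
  calc normP 1 u / normP 1 v
      ≤ (normP P u / √(hP.1.eigenvalues j)) / (normP P v / √(hP.1.eigenvalues J)) :=
        div_le_div₀ (div_nonneg (Real.sqrt_nonneg _) hsm.le) ((le_div_iff₀' hsm).mpr hu)
          (div_pos hvP hsM) ((div_le_iff₀' hsM).mpr hv')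
    _ = normP P u / normP P v * (√(hP.1.eigenvalues J) / √(hP.1.eigenvalues j)) := by
        rw [div_div_div_eq, div_mul_div_comm, mul_comm (normP P v)]
    _ ≤ normP P u / normP P v * kappa P :=
        mul_le_mul_of_nonneg_left hκ (div_nonneg (Real.sqrt_nonneg _) hvP.le)

theorem stmt2_general {n N : ℕ} (x y : Fin (N + 1) → Fin n → ℝ)
    (Pstar : Matrix (Fin n) (Fin n) ℝ) (hP : Pstar.PosDef)
    (γstar : ℝ) (hγ : γstar = ⨆ i, normP Pstar (y i) / normP Pstar (x i)) :
    (⨆ i, normP 1 (y i) / normP 1 (x i)) ≤ γstar * kappa Pstar := by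
  subst hγ
  refine ciSup_le fun i => (normP_one_div_le_mul_kappa hP (y i) (x i)).trans ?_
  exact mul_le_mul_of_nonneg_right
    (le_ciSup (f := fun j => normP Pstar (y j) / normP Pstar (x j)) (Set.finite_range _).bddAbove i)
    (Real.sqrt_nonneg _)

theorem stmt2 {n N : ℕ} (x y : Fin (N + 1) → Fin n → ℝ)
    (hx : ∀ i, x i ≠ 0)
    (Pstar : Matrix (Fin n) (Fin n) ℝ) (hP : Pstar.PosDef)
    (γstar : ℝ) (hγ : γstar = ⨆ i, normP Pstar (y i) / normP Pstar (x i)) :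
    (⨆ i, normP 1 (y i) / normP 1 (x i)) ≤ γstar * kappa Pstar :=
  stmt2_general x y Pstar hP γstar hγ
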